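/- Under the same hypotheses, for each fixed s ∈ [a+1, b] the function t ↦ u(t,s) is nondecreasing in t on [a, s-1], i.e., u(t,s) - u(t-1,s) ≥ 0 for a+1 ≤ t ≤ s-1, with strict increase when α > 0 and (γ > 0 or δ > 0). -/

import Mathlib

/-!
The backward difference of `H_μ(·, a)` is `H_{μ-1}(·, a)`, so
`∇_t u(t, s) = α H_{ν-2}(t, a) (γ H_{ν-1}(b, s-1) + δ H_{ν-2}(b, s-1)) / ξ`.
Since `ν - 2 > -1`, every `H` factor here is a ratio of Gamma values at positive arguments,
hence positive.
-/

noncomputable def H (μ : ℝ) (t a : ℤ) : ℝ :=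
  Real.Gamma ((t : ℝ) - a + μ) / (Real.Gamma ((t : ℝ) - a) * Real.Gamma (μ + 1))

noncomputable def xiBVP (ν : ℝ) (a b : ℤ) (α β γ δ : ℝ) : ℝ :=
  (β - α) * γ + α * γ * H (ν - 1) b a + α * δ * H (ν - 2) b a

noncomputable def uG (ν : ℝ) (a b : ℤ) (α β γ δ : ℝ) (t s : ℤ) : ℝ :=
  (1 / xiBVP ν a b α β γ δ) *
    (α * γ * H (ν - 1) t a * H (ν - 1) b (s - 1)
      + α * δ * H (ν - 1) t a * H (ν - 2) b (s - 1)
      + (β - α) * γ * H (ν - 1) b (s - 1)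
      + (β - α) * δ * H (ν - 2) b (s - 1))

noncomputable def vG (ν : ℝ) (a b : ℤ) (α β γ δ : ℝ) (t s : ℤ) : ℝ :=
  uG ν a b α β γ δ t s - H (ν - 1) t (s - 1)

noncomputable def GG (ν : ℝ) (a b : ℤ) (α β γ δ : ℝ) (t s : ℤ) : ℝ :=
  if t ≤ s - 1 then uG ν a b α β γ δ t s else vG ν a b α β γ δ t s

lemma Real.inv_Gamma_eq_mul_inv_Gamma_add_one (s : ℝ) :
    (Real.Gamma s)⁻¹ = s * (Real.Gamma (s + 1))⁻¹ := by
  rcases eq_or_ne s 0 with rfl | hs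
  · simp [Real.Gamma_zero]
  · rw [Real.Gamma_add_one hs, mul_inv, ← mul_assoc, mul_inv_cancel₀ hs, one_mul]

lemma H_pos {μ : ℝ} {t a : ℤ} (hμ : -1 < μ) (ht : a < t) : 0 < H μ t a := by
  have hx : (1 : ℝ) ≤ (t : ℝ) - a := by
    have : (a : ℝ) + 1 ≤ t := by exact_mod_cast ht
    linarith
  unfold H
  exact div_pos (Real.Gamma_pos_of_pos (by linarith))
    (mul_pos (Real.Gamma_pos_of_pos (by linarith)) (Real.Gamma_pos_of_pos (by linarith)))

/-- At `t = a + 1` this relies on `Γ 0 = 0`, which makes `H μ a a = 0`. -/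
lemma H_sub_H_sub_one {μ : ℝ} {t a : ℤ} (hμ : 0 < μ) (ht : a < t) :
    H μ t a - H μ (t - 1) a = H (μ - 1) t a := by
  set x : ℝ := (t : ℝ) - a with hx_def
  have hx : 1 ≤ x := by
    have : (a : ℝ) + 1 ≤ t := by exact_mod_cast ht
    linarith
  have hshift : ((t - 1 : ℤ) : ℝ) - a = x - 1 := by push_cast; ring
  have hnum : Real.Gamma (x + μ) = (x - 1 + μ) * Real.Gamma (x - 1 + μ) := by
    rw [← Real.Gamma_add_one (by linarith)]; ring_nf
  have hden : (Real.Gamma (x - 1))⁻¹ = (x - 1) * (Real.Gamma x)⁻¹ := by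
    rw [Real.inv_Gamma_eq_mul_inv_Gamma_add_one, sub_add_cancel]
  have hμΓ : Real.Gamma (μ + 1) = μ * Real.Gamma μ := Real.Gamma_add_one hμ.ne'
  have hΓx : Real.Gamma x ≠ 0 := (Real.Gamma_pos_of_pos (by linarith)).ne'
  have hΓμ : Real.Gamma μ ≠ 0 := (Real.Gamma_pos_of_pos hμ).ne'
  unfold H
  rw [hshift, ← hx_def, sub_add_cancel, div_mul_eq_div_div_swap, div_mul_eq_div_div_swap,
    div_eq_mul_inv _ (Real.Gamma (x - 1)), hden, hnum, hμΓ,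
    show x + (μ - 1) = x - 1 + μ by ring]
  field_simp
  ring

lemma uG_sub_uG_sub_one {ν : ℝ} (hν : 1 < ν) (a b : ℤ) (α β γ δ : ℝ) {t : ℤ} (ht : a < t)
    (s : ℤ) :
    uG ν a b α β γ δ t s - uG ν a b α β γ δ (t - 1) s =
      α * H (ν - 2) t a * (γ * H (ν - 1) b (s - 1) + δ * H (ν - 2) b (s - 1)) /
        xiBVP ν a b α β γ δ := by
  have hdiff := H_sub_H_sub_one (μ := ν - 1) (by linarith) ht
  rw [sub_sub, show (1 : ℝ) + 1 = 2 by norm_num] at hdiff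
  unfold uG
  rw [← sub_add_cancel (H (ν - 1) t a) (H (ν - 1) (t - 1) a), hdiff]
  ring

theorem u_monotone_general (ν : ℝ) (hν1 : 1 < ν) (a b : ℤ)
    (α β γ δ : ℝ) (hα : 0 ≤ α) (hγ : 0 ≤ γ) (hδ : 0 ≤ δ)
    (hξ : 0 < xiBVP ν a b α β γ δ)
    (s : ℤ) (hsb : s ≤ b)
    (t : ℤ) (hta : a + 1 ≤ t) :
    0 ≤ uG ν a b α β γ δ t s - uG ν a b α β γ δ (t - 1) s ∧
    (0 < α → (0 < γ ∨ 0 < δ) →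
      0 < uG ν a b α β γ δ t s - uG ν a b α β γ δ (t - 1) s) := by
  rw [uG_sub_uG_sub_one hν1 a b α β γ δ hta s]
  have hP : 0 < H (ν - 2) t a := H_pos (by linarith) hta
  have hQ : 0 < H (ν - 1) b (s - 1) := H_pos (by linarith) (by omega)
  have hR : 0 < H (ν - 2) b (s - 1) := H_pos (by linarith) (by omega)
  refine ⟨by positivity, fun hα' hγδ => ?_⟩
  have hsum : 0 < γ * H (ν - 1) b (s - 1) + δ * H (ν - 2) b (s - 1) := by
    rcases hγδ with hγ' | hδ'
    · exact add_pos_of_pos_of_nonneg (mul_pos hγ' hQ) (by positivity)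
    · exact add_pos_of_nonneg_of_pos (by positivity) (mul_pos hδ' hR)
  positivity

theorem u_monotone (ν : ℝ) (hν1 : 1 < ν) (hν2 : ν < 2) (a b : ℤ) (hab : a + 1 ≤ b)
    (α β γ δ : ℝ) (hα : 0 ≤ α) (hβ : 0 ≤ β) (hγ : 0 ≤ γ) (hδ : 0 ≤ δ)
    (hba : α ≤ β) (hξ : 0 < xiBVP ν a b α β γ δ)
    (s : ℤ) (hsa : a + 1 ≤ s) (hsb : s ≤ b)
    (t : ℤ) (hta : a + 1 ≤ t) (hts : t ≤ s - 1) :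
    0 ≤ uG ν a b α β γ δ t s - uG ν a b α β γ δ (t - 1) s ∧
    (0 < α → (0 < γ ∨ 0 < δ) →
      0 < uG ν a b α β γ δ t s - uG ν a b α β γ δ (t - 1) s) :=
  u_monotone_general ν hν1 a b α β γ δ hα hγ hδ hξ s hsb t hta
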